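/- Let G be the diamond graph on vertices x_1, x_2, x_3, x_4 with edges {x_1,x_2}, {x_2,x_3}, {x_3,x_4}, {x_1,x_4}, {x_1,x_3}. Then I_c(G) = (x_2,x_4) ∩ (x_1,x_3,x_4) ∩ (x_1,x_2,x_3) in K[x_1,x_2,x_3,x_4], and for every integer k ≥ 2 the symbolic power I_c(G)^(k) strictly contains I_c(G)^k. -/
import Mathlib


open MvPolynomial

noncomputable def symbPow {R : Type*} [CommRing R] (I : Ideal R) (k : ℕ) : Ideal R :=
  ⨅ p ∈ I.minimalPrimes, p ^ k

noncomputable def compIdeal {V : Type*} [Fintype V] [DecidableEq V]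
    (K : Type*) [Field K] (G : SimpleGraph V) : Ideal (MvPolynomial V K) :=
  Ideal.span {m | ∃ i j, G.Adj i j ∧ m = ∏ l ∈ Finset.univ \ {i, j}, X l}

/-- The diamond graph on vertices `0,1,2,3` with edges `{0,1},{1,2},{2,3},{0,3},{0,2}`. -/
def diamondGraph : SimpleGraph (Fin 4) :=
  SimpleGraph.fromEdgeSet {s(0, 1), s(1, 2), s(2, 3), s(0, 3), s(0, 2)}

section Aux

variable (K : Type*) [Field K]

private lemma Xmul (i j : Fin 4) : (X i * X j : MvPolynomial (Fin 4) K)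
    = monomial (Finsupp.single i 1 + Finsupp.single j 1) 1 := by
  rw [X, X, monomial_mul, one_mul]

private lemma prod_sdiff_pair (i j a b : Fin 4)
    (h : (Finset.univ \ {i, j} : Finset (Fin 4)) = {a, b}) (hab : a ≠ b) :
    ∏ l ∈ Finset.univ \ {i, j}, (X l : MvPolynomial (Fin 4) K) = X a * X b := by
  rw [h, Finset.prod_pair hab]

private lemma genSet_eq :
    {m | ∃ i j, diamondGraph.Adj i j ∧ m = ∏ l ∈ Finset.univ \ {i, j}, X l}
    = ({X 2 * X 3, X 0 * X 3, X 0 * X 1, X 1 * X 2, X 1 * X 3} :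
        Set (MvPolynomial (Fin 4) K)) := by
  ext m
  constructor
  · rintro ⟨i, j, hadj, rfl⟩
    rw [diamondGraph, SimpleGraph.fromEdgeSet_adj] at hadj
    obtain ⟨h, hne⟩ := hadj
    simp only [Set.mem_insert_iff, Set.mem_singleton_iff] at h
    rcases h with h | h | h | h | h <;> rw [Sym2.eq_iff] at h <;>
      rcases h with ⟨rfl, rfl⟩ | ⟨rfl, rfl⟩ <;>
      simp only [Set.mem_insert_iff, Set.mem_singleton_iff] <;>
      first
        | exact Or.inl (prod_sdiff_pair K _ _ 2 3 (by decide) (by decide))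
        | exact Or.inr (Or.inl (prod_sdiff_pair K _ _ 0 3 (by decide) (by decide)))
        | exact Or.inr (Or.inr (Or.inl (prod_sdiff_pair K _ _ 0 1 (by decide) (by decide))))
        | exact Or.inr (Or.inr (Or.inr (Or.inl
            (prod_sdiff_pair K _ _ 1 2 (by decide) (by decide)))))
        | exact Or.inr (Or.inr (Or.inr (Or.inr
            (prod_sdiff_pair K _ _ 1 3 (by decide) (by decide)))))
  · intro h
    simp only [Set.mem_insert_iff, Set.mem_singleton_iff] at h
    rcases h with rfl | rfl | rfl | rfl | rfl
    · exact ⟨0, 1, by simp [diamondGraph], (prod_sdiff_pair K 0 1 2 3 (by decide) (by decide)).symm⟩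
    · exact ⟨1, 2, by simp [diamondGraph], (prod_sdiff_pair K 1 2 0 3 (by decide) (by decide)).symm⟩
    · exact ⟨2, 3, by simp [diamondGraph], (prod_sdiff_pair K 2 3 0 1 (by decide) (by decide)).symm⟩
    · exact ⟨0, 3, by simp [diamondGraph], (prod_sdiff_pair K 0 3 1 2 (by decide) (by decide)).symm⟩
    · exact ⟨0, 2, by simp [diamondGraph], (prod_sdiff_pair K 0 2 1 3 (by decide) (by decide)).symm⟩

private lemma compIdeal_diamond_eq_span : compIdeal K diamondGraph
    = Ideal.span ({X 2 * X 3, X 0 * X 3, X 0 * X 1, X 1 * X 2, X 1 * X 3} :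
        Set (MvPolynomial (Fin 4) K)) := by
  rw [compIdeal, genSet_eq]

private lemma pair_le (m : Fin 4 →₀ ℕ) (i j : Fin 4) (hij : i ≠ j)
    (hi : m i ≠ 0) (hj : m j ≠ 0) :
    Finsupp.single i 1 + Finsupp.single j 1 ≤ m := by
  have h1 : 1 ≤ m i := Nat.one_le_iff_ne_zero.mpr hi
  have h2 : 1 ≤ m j := Nat.one_le_iff_ne_zero.mpr hj
  rw [Finsupp.le_def]
  intro x
  simp only [Finsupp.add_apply, Finsupp.single_apply]
  split_ifs with h h' h'
  · exact absurd (h.trans h'.symm) hij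
  · subst h; omega
  · subst h'; omega
  · omega

private lemma inf_le_span :
    (Ideal.span ({X 1, X 3} : Set (MvPolynomial (Fin 4) K)) ⊓
      Ideal.span ({X 0, X 2, X 3} : Set (MvPolynomial (Fin 4) K)) ⊓
      Ideal.span ({X 0, X 1, X 2} : Set (MvPolynomial (Fin 4) K))) ≤
    Ideal.span ({X 2 * X 3, X 0 * X 3, X 0 * X 1, X 1 * X 2, X 1 * X 3} :
        Set (MvPolynomial (Fin 4) K)) := by
  have e1 : ({X 1, X 3} : Set (MvPolynomial (Fin 4) K)) = X '' {1, 3} := by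
    simp [Set.image_insert_eq]
  have e2 : ({X 0, X 2, X 3} : Set (MvPolynomial (Fin 4) K)) = X '' {0, 2, 3} := by
    simp [Set.image_insert_eq]
  have e3 : ({X 0, X 1, X 2} : Set (MvPolynomial (Fin 4) K)) = X '' {0, 1, 2} := by
    simp [Set.image_insert_eq]
  have e4 : ({X 2 * X 3, X 0 * X 3, X 0 * X 1, X 1 * X 2, X 1 * X 3} :
      Set (MvPolynomial (Fin 4) K)) = (fun s => monomial s (1 : K)) ''
        ({Finsupp.single 2 1 + Finsupp.single 3 1, Finsupp.single 0 1 + Finsupp.single 3 1,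
          Finsupp.single 0 1 + Finsupp.single 1 1, Finsupp.single 1 1 + Finsupp.single 2 1,
          Finsupp.single 1 1 + Finsupp.single 3 1} : Set (Fin 4 →₀ ℕ)) := by
    simp only [Set.image_insert_eq, Set.image_singleton, ← Xmul]
  intro f hf
  rw [Ideal.mem_inf, Ideal.mem_inf] at hf
  obtain ⟨⟨hf1, hf2⟩, hf3⟩ := hf
  rw [e1, mem_ideal_span_X_image] at hf1
  rw [e2, mem_ideal_span_X_image] at hf2
  rw [e3, mem_ideal_span_X_image] at hf3
  rw [e4, mem_ideal_span_monomial_image]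
  intro m hm
  obtain ⟨i, hi, hmi⟩ := hf1 m hm
  obtain ⟨j, hj, hmj⟩ := hf2 m hm
  obtain ⟨l, hl, hml⟩ := hf3 m hm
  simp only [Set.mem_insert_iff, Set.mem_singleton_iff] at hi hj hl
  rcases hi with rfl | rfl
  · rcases hj with rfl | rfl | rfl
    · exact ⟨_, Or.inr (Or.inr (Or.inl rfl)), pair_le m 0 1 (by decide) hmj hmi⟩
    · exact ⟨_, Or.inr (Or.inr (Or.inr (Or.inl rfl))), pair_le m 1 2 (by decide) hmi hmj⟩
    · exact ⟨_, Or.inr (Or.inr (Or.inr (Or.inr rfl))), pair_le m 1 3 (by decide) hmi hmj⟩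
  · rcases hl with rfl | rfl | rfl
    · exact ⟨_, Or.inr (Or.inl rfl), pair_le m 0 3 (by decide) hml hmi⟩
    · exact ⟨_, Or.inr (Or.inr (Or.inr (Or.inr rfl))), pair_le m 1 3 (by decide) hml hmi⟩
    · exact ⟨_, Or.inl rfl, pair_le m 2 3 (by decide) hml hmi⟩

private lemma span_le_inf :
    Ideal.span ({X 2 * X 3, X 0 * X 3, X 0 * X 1, X 1 * X 2, X 1 * X 3} :
        Set (MvPolynomial (Fin 4) K)) ≤
    (Ideal.span ({X 1, X 3} : Set (MvPolynomial (Fin 4) K)) ⊓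
      Ideal.span ({X 0, X 2, X 3} : Set (MvPolynomial (Fin 4) K)) ⊓
      Ideal.span ({X 0, X 1, X 2} : Set (MvPolynomial (Fin 4) K))) := by
  rw [Ideal.span_le]
  intro g hg
  simp only [Set.mem_insert_iff, Set.mem_singleton_iff] at hg
  have h11 : (X 1 : MvPolynomial (Fin 4) K)
      ∈ Ideal.span ({X 1, X 3} : Set (MvPolynomial (Fin 4) K)) := Ideal.subset_span (by simp)
  have h13 : (X 3 : MvPolynomial (Fin 4) K)
      ∈ Ideal.span ({X 1, X 3} : Set (MvPolynomial (Fin 4) K)) := Ideal.subset_span (by simp)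
  have h20 : (X 0 : MvPolynomial (Fin 4) K)
      ∈ Ideal.span ({X 0, X 2, X 3} : Set (MvPolynomial (Fin 4) K)) := Ideal.subset_span (by simp)
  have h22 : (X 2 : MvPolynomial (Fin 4) K)
      ∈ Ideal.span ({X 0, X 2, X 3} : Set (MvPolynomial (Fin 4) K)) := Ideal.subset_span (by simp)
  have h23 : (X 3 : MvPolynomial (Fin 4) K)
      ∈ Ideal.span ({X 0, X 2, X 3} : Set (MvPolynomial (Fin 4) K)) := Ideal.subset_span (by simp)
  have h30 : (X 0 : MvPolynomial (Fin 4) K)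
      ∈ Ideal.span ({X 0, X 1, X 2} : Set (MvPolynomial (Fin 4) K)) := Ideal.subset_span (by simp)
  have h31 : (X 1 : MvPolynomial (Fin 4) K)
      ∈ Ideal.span ({X 0, X 1, X 2} : Set (MvPolynomial (Fin 4) K)) := Ideal.subset_span (by simp)
  have h32 : (X 2 : MvPolynomial (Fin 4) K)
      ∈ Ideal.span ({X 0, X 1, X 2} : Set (MvPolynomial (Fin 4) K)) := Ideal.subset_span (by simp)
  rcases hg with rfl | rfl | rfl | rfl | rfl <;>
    refine Submodule.mem_inf.mpr ⟨Submodule.mem_inf.mpr ⟨?_, ?_⟩, ?_⟩ <;>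
    first
      | exact Ideal.mul_mem_left _ _ h11
      | exact Ideal.mul_mem_right _ _ h11
      | exact Ideal.mul_mem_left _ _ h13
      | exact Ideal.mul_mem_right _ _ h13
      | exact Ideal.mul_mem_left _ _ h20
      | exact Ideal.mul_mem_right _ _ h20
      | exact Ideal.mul_mem_left _ _ h22
      | exact Ideal.mul_mem_right _ _ h22
      | exact Ideal.mul_mem_left _ _ h23
      | exact Ideal.mul_mem_right _ _ h23
      | exact Ideal.mul_mem_left _ _ h30
      | exact Ideal.mul_mem_right _ _ h30
      | exact Ideal.mul_mem_left _ _ h31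
      | exact Ideal.mul_mem_right _ _ h31
      | exact Ideal.mul_mem_left _ _ h32
      | exact Ideal.mul_mem_right _ _ h32

private lemma part2 (k : ℕ) (hk : 2 ≤ k) :
    compIdeal K diamondGraph ^ k < symbPow (compIdeal K diamondGraph) k := by
  have hIeq := compIdeal_diamond_eq_span K
  set I := compIdeal K diamondGraph with hIdef
  set a := k - k / 2 with ha
  set b := k / 2 with hb
  set w : MvPolynomial (Fin 4) K := X 0 ^ a * X 1 ^ a * X 3 ^ b with hw
  have hab : a + b = k := by omega
  have h2a : k ≤ a + a := by omega
  have hak : a < k := by omega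
  have hg13 : (X 1 * X 3 : MvPolynomial (Fin 4) K) ∈ I := by
    rw [hIeq]; exact Ideal.subset_span (by simp)
  have hg01 : (X 0 * X 1 : MvPolynomial (Fin 4) K) ∈ I := by
    rw [hIeq]; exact Ideal.subset_span (by simp)
  have hg03 : (X 0 * X 3 : MvPolynomial (Fin 4) K) ∈ I := by
    rw [hIeq]; exact Ideal.subset_span (by simp)
  have hwsym : w ∈ symbPow I k := by
    simp only [symbPow, Ideal.mem_iInf]
    intro p hp
    have hprime : p.IsPrime := hp.1.1
    have hIle : I ≤ p := hp.1.2
    have mem2 : ∀ {x y : MvPolynomial (Fin 4) K} {c d : ℕ}, x ∈ p → y ∈ p → c + d = k →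
        x ^ c * y ^ d ∈ p ^ k := by
      intro x y c d hx hy hcd
      have := Ideal.mul_mem_mul (Ideal.pow_mem_pow hx c) (Ideal.pow_mem_pow hy d)
      rwa [← pow_add, hcd] at this
    rcases hprime.mem_or_mem (hIle hg13) with h1 | h3
    · rcases hprime.mem_or_mem (hIle hg03) with h0 | h3
      · have : X 0 ^ a * X 1 ^ a ∈ p ^ (a + a) := by
          rw [pow_add]; exact Ideal.mul_mem_mul (Ideal.pow_mem_pow h0 a) (Ideal.pow_mem_pow h1 a)
        exact Ideal.mul_mem_right _ _ (Ideal.pow_le_pow_right h2a this)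
      · have : w = X 0 ^ a * (X 1 ^ a * X 3 ^ b) := by rw [hw]; ring
        rw [this]
        exact Ideal.mul_mem_left _ _ (mem2 h1 h3 hab)
    · rcases hprime.mem_or_mem (hIle hg01) with h0 | h1
      · have : w = X 1 ^ a * (X 0 ^ a * X 3 ^ b) := by rw [hw]; ring
        rw [this]
        exact Ideal.mul_mem_left _ _ (mem2 h0 h3 hab)
      · have : w = X 0 ^ a * (X 1 ^ a * X 3 ^ b) := by rw [hw]; ring
        rw [this]
        exact Ideal.mul_mem_left _ _ (mem2 h1 h3 hab)
  have hwnot : w ∉ I ^ k := by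
    intro hmem
    set φ : MvPolynomial (Fin 4) K →ₐ[K] Polynomial K := aeval fun _ => Polynomial.X with hφ
    have hmap : Ideal.map φ.toRingHom I ≤ Ideal.span {Polynomial.X ^ 2} := by
      rw [hIeq, Ideal.map_span, Ideal.span_le]
      rintro _ ⟨g, hg, rfl⟩
      simp only [Set.mem_insert_iff, Set.mem_singleton_iff] at hg
      rcases hg with rfl | rfl | rfl | rfl | rfl <;>
        exact Ideal.subset_span (by simp [hφ, sq])
    have h1 : φ w ∈ Ideal.map φ.toRingHom (I ^ k) := Ideal.mem_map_of_mem _ hmem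
    rw [Ideal.map_pow] at h1
    have h2 : φ w ∈ Ideal.span {Polynomial.X ^ 2} ^ k :=
      (Ideal.pow_right_mono hmap k) h1
    rw [Ideal.span_singleton_pow, ← pow_mul] at h2
    have hdvd : (Polynomial.X : Polynomial K) ^ (2 * k) ∣ φ w :=
      Ideal.mem_span_singleton.mp h2
    have hφw : φ w = Polynomial.X ^ (a + a + b) := by
      simp [hw, hφ, map_mul, map_pow, ← pow_add]
    rw [hφw] at hdvd
    have hne : (Polynomial.X : Polynomial K) ^ (a + a + b) ≠ 0 :=
      pow_ne_zero _ Polynomial.X_ne_zero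
    have := Polynomial.natDegree_le_of_dvd hdvd hne
    simp only [Polynomial.natDegree_X_pow] at this
    omega
  have hle : I ^ k ≤ symbPow I k := by
    refine le_iInf fun p => le_iInf fun hp => ?_
    exact Ideal.pow_right_mono hp.1.2 k
  exact lt_of_le_of_ne hle fun h => hwnot (h ▸ hwsym)

end Aux

theorem stmt8 (K : Type*) [Field K] :
    (compIdeal K diamondGraph =
      Ideal.span ({X 1, X 3} : Set (MvPolynomial (Fin 4) K)) ⊓
      Ideal.span ({X 0, X 2, X 3} : Set (MvPolynomial (Fin 4) K)) ⊓
      Ideal.span ({X 0, X 1, X 2} : Set (MvPolynomial (Fin 4) K))) ∧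
    ∀ k : ℕ, 2 ≤ k → compIdeal K diamondGraph ^ k < symbPow (compIdeal K diamondGraph) k := by
  constructor
  · rw [compIdeal_diamond_eq_span]
    exact le_antisymm (span_le_inf K) (inf_le_span K)
  · exact part2 K
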